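/- arXiv:2511.13447 — 9 statements merged into one kernel-verified Lean document; each statement's English description precedes it below -/
import Mathlib

section
/- Let E* be an ordered field extension of an ordered field E and let p be the type of an element x in E* \ E over E. Then the invariance group {c in E : c + p(E*) = p(E*)} equals the set of elements of E bounded in absolute value by the breadth of p, i.e. equals {c in E : for all a, b in E with a < p(E*) < b, |c| < b - a}. -/
/-- The invariance group of the type of `x` over `E` equals the set of elements of `E`
bounded in absolute value by the breadth of the type. -/
theorem stmt_0 {K : Type*} [Field K] [LinearOrder K] [IsStrictOrderedRing K] (E : Subfield K) (x : K) (hx : x ∉ E) :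
    {c : K | c ∈ E ∧ (fun y => c + y) '' {y : K | ∀ a ∈ E, a < x ↔ a < y} =
      {y : K | ∀ a ∈ E, a < x ↔ a < y}} =
    {c : K | c ∈ E ∧ ∀ a ∈ E, ∀ b ∈ E, a < x → x < b → |c| < b - a} := by
  ext c
  simp only [Set.mem_setOf_eq]
  constructor
  · rintro ⟨hc, him⟩
    refine ⟨hc, ?_⟩
    intro a ha b hb hax hxb
    have hxS : x ∈ {y : K | ∀ a ∈ E, a < x ↔ a < y} := fun a _ => Iff.rfl
    -- c + x is in the set
    have h1 : (∀ a ∈ E, a < x ↔ a < c + x) := by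
      have : c + x ∈ {y : K | ∀ a ∈ E, a < x ↔ a < y} := by
        rw [← him]; exact ⟨x, hxS, rfl⟩
      exact this
    -- x - c is in the set
    have h2 : (∀ a ∈ E, a < x ↔ a < x - c) := by
      have : x ∈ (fun y => c + y) '' {y : K | ∀ a ∈ E, a < x ↔ a < y} := by
        rw [him]; exact hxS
      obtain ⟨z, hz, hzx⟩ := this
      have hzx' : c + z = x := hzx
      have : z = x - c := by linarith
      subst this; exact hz
    have hb1 : ¬ (b < c + x) := by rw [← h1 b hb]; exact not_lt.2 hxb.le
    have hb2 : ¬ (b < x - c) := by rw [← h2 b hb]; exact not_lt.2 hxb.le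
    rw [abs_lt]
    constructor <;> push_neg at hb1 hb2 <;> linarith
  · rintro ⟨hc, hbd⟩
    have key : ∀ c' : K, c' ∈ E → (∀ a ∈ E, ∀ b ∈ E, a < x → x < b → |c'| < b - a) →
        ∀ a ∈ E, (a - c' < x ↔ a < x) := by
      intro c' hc' hbd' a ha
      constructor
      · intro h1
        by_contra h2
        have hxa : x < a := lt_of_le_of_ne (not_lt.1 h2) (fun h => hx (h ▸ ha))
        have := hbd' (a - c') (sub_mem ha hc') a ha h1 hxa
        have := le_abs_self c'
        linarith
      · intro h1
        by_contra h2
        have hxa : x < a - c' := lt_of_le_of_ne (not_lt.1 h2)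
          (fun h => hx (h ▸ sub_mem ha hc'))
        have := hbd' a ha (a - c') (sub_mem ha hc') h1 hxa
        have := neg_abs_le c'
        linarith
    refine ⟨hc, ?_⟩
    ext y
    simp only [Set.mem_image, Set.mem_setOf_eq]
    constructor
    · rintro ⟨z, hz, rfl⟩
      intro a ha
      have k := key c hc hbd a ha
      have hz' := hz (a - c) (sub_mem ha hc)
      constructor
      · intro h; have : a - c < x := k.2 h
        have : a - c < z := hz'.1 this
        linarith
      · intro h; have : a - c < z := by linarith
        exact k.1 (hz'.2 this)
    · intro hy
      refine ⟨y - c, ?_, by ring⟩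
      intro a ha
      have k := key c hc hbd (a + c) (add_mem ha hc)
      simp only [add_sub_cancel_right] at k
      have hy' := hy (a + c) (add_mem ha hc)
      constructor
      · intro h; have : a + c < x := k.1 h
        have : a + c < y := hy'.1 this
        linarith
      · intro h; have : a + c < y := by linarith
        exact k.2 (hy'.2 this)
end

section
/- Let E be an ordered field, E* an ordered field extension, and x in E* \ E. The following are equivalent: (1) Br(x/E)(E*) + x equals the set of realizations of tp(x/E) in E*; (2) there is no convex additive subgroup G of E, no c in E and no sign σ in {+1,-1} such that G < σx - c < E^{>G} (i.e. σx - c lies strictly above G but strictly below every element of E exceeding G). -/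
lemma exists_G_of_gap {K : Type*} [Field K] [LinearOrder K] [IsStrictOrderedRing K] (E : Subfield K) (x : K) (hx : x ∉ E)
    (c σ d : K) (hcE : c ∈ E) (hσ : σ = 1 ∨ σ = -1) (hdef : σ * x - c = d) (hd : 0 < d)
    (hadd : ∀ e1 e2 : K, e1 ∈ E → e2 ∈ E → |e1| < d → |e2| < d → |e1 + e2| < d) :
    ∃ (G : AddSubgroup K) (c' σ' : K),
        (G : Set K) ⊆ E ∧ (∀ y ∈ E, ∀ g ∈ G, |y| ≤ |g| → y ∈ G) ∧
        c' ∈ E ∧ (σ' = 1 ∨ σ' = -1) ∧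
        (∀ g ∈ G, g < σ' * x - c') ∧
        (∀ e ∈ E, (∀ g ∈ G, g < e) → σ' * x - c' < e) := by
  have hdE : d ∉ E := by
    intro hdmem
    apply hx
    have hσx : σ * x ∈ E := by
      have : σ * x = d + c := by linarith [hdef]
      rw [this]; exact E.add_mem hdmem hcE
    rcases hσ with h | h
    · simpa [h] using hσx
    · have : (-1 : K) * (σ * x) ∈ E := E.mul_mem (E.neg_mem E.one_mem) hσx
      rw [h] at this; simpa using this
  refine ⟨{ carrier := {e | e ∈ E ∧ |e| < d},
            zero_mem' := ⟨E.zero_mem, by simpa using hd⟩,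
            add_mem' := fun h1 h2 => ⟨E.add_mem h1.1 h2.1, hadd _ _ h1.1 h2.1 h1.2 h2.2⟩,
            neg_mem' := fun h => ⟨E.neg_mem h.1, by simpa using h.2⟩ }, c, σ, ?_, ?_, hcE, hσ, ?_, ?_⟩
  · exact fun e he => he.1
  · exact fun y hy g hg hle => ⟨hy, lt_of_le_of_lt hle hg.2⟩
  · intro g hg
    rw [hdef]
    exact lt_of_le_of_lt (le_abs_self g) hg.2
  · intro e heE hgt
    rw [hdef]
    have h0 : (0 : K) < e := hgt 0 ⟨E.zero_mem, by simpa using hd⟩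
    rcases lt_trichotomy e d with h | h | h
    · exact absurd (hgt e ⟨heE, by rwa [abs_of_pos h0]⟩) (lt_irrefl e)
    · exact absurd (h ▸ heE) hdE
    · exact h

/-- A cut `x` over `E` is symmetric (breadth-translation invariant) iff there is no
convex additive subgroup `G` of `E`, `c ∈ E` and sign `σ` with `G < σx - c < E^{>G}`. -/
theorem stmt_1 {K : Type*} [Field K] [LinearOrder K] [IsStrictOrderedRing K] (E : Subfield K) (x : K) (hx : x ∉ E) :
    ((fun t => t + x) '' {t : K | ∀ a ∈ E, ∀ b ∈ E, a < x → x < b → |t| < b - a} =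
      {y : K | ∀ a ∈ E, a < x ↔ a < y}) ↔
    ¬ ∃ (G : AddSubgroup K) (c σ : K),
        (G : Set K) ⊆ E ∧ (∀ y ∈ E, ∀ g ∈ G, |y| ≤ |g| → y ∈ G) ∧
        c ∈ E ∧ (σ = 1 ∨ σ = -1) ∧
        (∀ g ∈ G, g < σ * x - c) ∧
        (∀ e ∈ E, (∀ g ∈ G, g < e) → σ * x - c < e) := by
  constructor
  · -- symmetric → no gap witness
    intro hEq
    rintro ⟨G, c, σ, hGE, hconv, hcE, hσ, hlow, hup⟩
    have h0G : (0 : K) ∈ G := G.zero_mem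
    rcases hσ with rfl | rfl
    · -- σ = 1
      simp only [one_mul] at hlow hup
      have hd : 0 < x - c := by have := hlow 0 h0G; linarith
      have hmem : c ∈ (fun t => t + x) ''
          {t : K | ∀ a ∈ E, ∀ b ∈ E, a < x → x < b → |t| < b - a} := by
        refine ⟨c - x, ?_, by ring⟩
        intro a haE b hbE hax hxb
        have hg1 : ∃ g1 ∈ G, a - c ≤ g1 := by
          by_contra hcon
          push_neg at hcon
          have := hup (a - c) (E.sub_mem haE hcE) hcon
          linarith
        obtain ⟨g1, hg1G, hg1le⟩ := hg1
        have hba : ∀ g ∈ G, g < b - a := by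
          intro g hg
          have h3 : g1 + g < x - c := hlow _ (G.add_mem hg1G hg)
          linarith
        have := hup (b - a) (E.sub_mem hbE haE) hba
        rw [abs_of_neg (by linarith : c - x < 0)]
        linarith
      rw [hEq] at hmem
      exact absurd ((hmem c hcE).mp (by linarith)) (lt_irrefl c)
    · -- σ = -1
      simp only [neg_one_mul] at hlow hup
      have hd : 0 < -x - c := by have := hlow 0 h0G; linarith
      have h2E : (2 : K) ∈ E := by
        have := E.add_mem E.one_mem E.one_mem
        rwa [one_add_one_eq_two] at this
      have hmem : (-x - 2*c) ∈ (fun t => t + x) ''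
          {t : K | ∀ a ∈ E, ∀ b ∈ E, a < x → x < b → |t| < b - a} := by
        refine ⟨-2*x - 2*c, ?_, by ring⟩
        intro a haE b hbE hax hxb
        have hg1 : ∃ g1 ∈ G, -c - b ≤ g1 := by
          by_contra hcon
          push_neg at hcon
          have := hup (-c - b) (E.sub_mem (E.neg_mem hcE) hbE) hcon
          linarith
        obtain ⟨g1, hg1G, hg1le⟩ := hg1
        have hca : ∀ g2 ∈ G, g2 < -c - a := by
          intro g2 hg2
          by_contra hcon
          push_neg at hcon
          have := hlow g2 hg2
          linarith
        have heE : -c - a - g1 ∈ E := E.sub_mem (E.sub_mem (E.neg_mem hcE) haE) (hGE hg1G)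
        have he2E : (-c - a - g1)/2 ∈ E := E.div_mem heE h2E
        have hgt : ∀ g ∈ G, g < (-c - a - g1)/2 := by
          intro g hg
          by_contra hcon
          push_neg at hcon
          have := hca (g + g + g1) (G.add_mem (G.add_mem hg hg) hg1G)
          linarith
        have := hup _ he2E hgt
        rw [abs_of_pos (by linarith : (0:K) < -2*x - 2*c)]
        linarith
      rw [hEq] at hmem
      have hiff := hmem (-c) (E.neg_mem hcE)
      have : -c < x := hiff.mpr (by linarith)
      linarith
  · -- no gap witness → symmetric
    intro hno
    apply Set.Subset.antisymm
    · -- Br + x ⊆ realizations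
      rintro y ⟨t, ht, rfl⟩
      intro a haE
      by_contra hiff
      by_cases hax : a < x
      · -- a < x but t + x ≤ a
        have hle : t + x ≤ a := not_lt.1 fun h => hiff (iff_of_true hax h)
        apply hno
        refine exists_G_of_gap E x hx a 1 (x - a) haE (Or.inl rfl) (by ring)
          (by linarith) ?_
        intro e1 e2 h1E h2E h1 h2
        refine lt_of_le_of_lt (abs_add_le e1 e2) ?_
        by_contra hcon
        push_neg at hcon
        have habs1 : |e1| ∈ E := by
          rcases abs_choice e1 with h | h <;> rw [h]
          exacts [h1E, E.neg_mem h1E]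
        have habs2 : |e2| ∈ E := by
          rcases abs_choice e2 with h | h <;> rw [h]
          exacts [h2E, E.neg_mem h2E]
        have ha' : a + |e2| ∈ E := E.add_mem haE habs2
        have hbE' : a + |e1| + |e2| ∈ E := E.add_mem (E.add_mem haE habs1) habs2
        have hxb : x < a + |e1| + |e2| := by
          rcases lt_trichotomy x (a + |e1| + |e2|) with h | h | h
          · exact h
          · exact absurd (h ▸ hbE') hx
          · linarith
        have hax' : a + |e2| < x := by linarith
        have hlt := ht (a + |e2|) ha' (a + |e1| + |e2|) hbE' hax' hxb
        have hta : x - a ≤ |t| := le_trans (by linarith) (neg_le_abs t)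
        have : |e1| < x - a := h1
        linarith [abs_nonneg e1, (by linarith : (a + |e1| + |e2|) - (a + |e2|) = |e1|)]
      · -- x < a but a < t + x
        have hxa : x < a := by
          rcases lt_trichotomy x a with h | h | h
          · exact h
          · exact absurd (h ▸ haE) hx
          · exact absurd h hax
        have hlt2 : a < t + x := by
          by_contra h
          exact hiff (iff_of_false hax h)
        apply hno
        refine exists_G_of_gap E x hx (-a) (-1) (a - x) (E.neg_mem haE) (Or.inr rfl) (by ring)
          (by linarith) ?_
        intro e1 e2 h1E h2E h1 h2
        refine lt_of_le_of_lt (abs_add_le e1 e2) ?_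
        by_contra hcon
        push_neg at hcon
        have habs1 : |e1| ∈ E := by
          rcases abs_choice e1 with h | h <;> rw [h]
          exacts [h1E, E.neg_mem h1E]
        have habs2 : |e2| ∈ E := by
          rcases abs_choice e2 with h | h <;> rw [h]
          exacts [h2E, E.neg_mem h2E]
        have hb' : a - |e2| ∈ E := E.sub_mem haE habs2
        have ha'' : a - |e1| - |e2| ∈ E := E.sub_mem (E.sub_mem haE habs1) habs2
        have hxb : x < a - |e2| := by linarith
        have hax' : a - |e1| - |e2| < x := by
          rcases lt_trichotomy (a - |e1| - |e2|) x with h | h | h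
          · exact h
          · exact absurd (h ▸ hx) (fun hh => hh ha'')
          · linarith
        have hlt := ht (a - |e1| - |e2|) ha'' (a - |e2|) hb' hax' hxb
        have hta : a - x < t := by linarith
        have := le_abs_self t
        linarith [abs_nonneg e1]
    · -- realizations ⊆ Br + x
      intro y hy
      refine ⟨y - x, ?_, by ring⟩
      intro a haE b hbE hax hxb
      have h1 : a < y := (hy a haE).mp hax
      have h2 : y ≤ b := by
        by_contra hc
        push_neg at hc
        have := (hy b hbE).mpr hc
        linarith
      rw [abs_lt]
      constructor <;> linarith
end

section
/- Let E be an ordered field with a convex subring O, E* an ordered field extension, and M a partial type over E defining a convex additive subgroup of E. Then M(E*) is an O-module if and only if M(E) is an O-module. Consequently, if x in E* \ E is O-symmetric then Br(x/E)(E*) is an O-module. -/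
/-- For a convex subring `O` of `E` and a convex subgroup `M` of `E`, the realization
`M(E*)` is an `O`-module iff `M(E)` is; consequently, if `x` is `O`-symmetric then its
breadth `Br(x/E)(E*)` is an `O`-module. -/
theorem stmt_2 {K : Type*} [Field K] [LinearOrder K] [IsStrictOrderedRing K] (E : Subfield K) (O : Subring K)
    (hOE : (O : Set K) ⊆ E)
    (hOconv : ∀ y ∈ E, ∀ r ∈ O, |y| ≤ |r| → y ∈ O)
    (M : AddSubgroup K) (hME : (M : Set K) ⊆ E)
    (hMconv : ∀ y ∈ E, ∀ m ∈ M, |y| ≤ |m| → y ∈ M) :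
    ((∀ t ∈ {t : K | ∀ c ∈ E, (∀ m ∈ M, m < c) → |t| < c}, ∀ r ∈ O,
        r * t ∈ {t : K | ∀ c ∈ E, (∀ m ∈ M, m < c) → |t| < c}) ↔
      (∀ t ∈ M, ∀ r ∈ O, r * t ∈ M))
    ∧ (∀ x : K, x ∉ E →
        -- `x` is symmetric:
        ((fun t => t + x) '' {t : K | ∀ a ∈ E, ∀ b ∈ E, a < x → x < b → |t| < b - a} =
          {y : K | ∀ a ∈ E, a < x ↔ a < y}) →
        -- `Br(x/E)(E)` is an `O`-module:
        (∀ t ∈ E, (∀ a ∈ E, ∀ b ∈ E, a < x → x < b → |t| < b - a) →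
          ∀ r ∈ O, r * t ∈ E ∧ (∀ a ∈ E, ∀ b ∈ E, a < x → x < b → |r * t| < b - a)) →
        -- then `Br(x/E)(E*)` is an `O`-module:
        ∀ t : K, (∀ a ∈ E, ∀ b ∈ E, a < x → x < b → |t| < b - a) →
          ∀ r ∈ O, ∀ a ∈ E, ∀ b ∈ E, a < x → x < b → |r * t| < b - a) := by
  have habsE : ∀ y ∈ E, |y| ∈ E := by
    intro y hy
    rcases abs_choice y with h | h <;> rw [h]
    exacts [hy, E.neg_mem hy]
  have habsO : ∀ r ∈ O, |r| ∈ O := by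
    intro r hr
    rcases abs_choice r with h | h <;> rw [h]
    exacts [hr, O.neg_mem hr]
  constructor
  · constructor
    · -- realization O-module → M O-module
      intro h t ht r hr
      have htE : t ∈ E := hME ht
      have hrE : (r : K) ∈ E := hOE hr
      have hrt : r * t ∈ {t : K | ∀ c ∈ E, (∀ m ∈ M, m < c) → |t| < c} := by
        refine h t ?_ r hr
        intro c hcE hc
        rcases abs_choice t with h1 | h1 <;> rw [h1]
        · exact hc t ht
        · exact hc (-t) (M.neg_mem ht)
      by_contra hne
      have key : ∀ m ∈ M, m < |r * t| := by
        intro m hm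
        by_contra hle
        push_neg at hle
        exact hne (hMconv (r * t) (E.mul_mem hrE htE) m hm
          (hle.trans (le_abs_self m)))
      exact absurd (hrt (|r * t|) (habsE _ (E.mul_mem hrE htE)) key) (lt_irrefl _)
    · -- M O-module → realization O-module
      intro h t ht r hr c hcE hc
      rcases eq_or_ne r 0 with rfl | hr0
      · simpa using hc 0 M.zero_mem
      · have habs : |r| ∈ O := habsO r hr
        have hrpos : (0 : K) < |r| := abs_pos.mpr hr0
        have hcr : c / |r| ∈ E := E.div_mem hcE (hOE habs)
        have hlt : |t| < c / |r| := by
          refine ht _ hcr ?_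
          intro m hm
          have h1 : |r| * m < c := hc _ (h m hm (|r|) habs)
          rw [lt_div_iff₀ hrpos]
          linarith [mul_comm m (|r|)]
        calc |r * t| = |r| * |t| := abs_mul r t
          _ < c := by
              have := mul_lt_mul_of_pos_left hlt hrpos
              rwa [mul_div_cancel₀ _ (ne_of_gt hrpos)] at this
  · -- part 2
    intro x hx _hsym hBr t ht r hr a haE b hbE hax hxb
    have hba : (0 : K) < b - a := sub_pos.mpr (hax.trans hxb)
    rcases eq_or_ne r 0 with rfl | hr0
    · simpa using hba
    · have habs : |r| ∈ O := habsO r hr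
      have hrpos : (0 : K) < |r| := abs_pos.mpr hr0
      by_cases hcase : ∃ a' ∈ E, ∃ b' ∈ E, a' < x ∧ x < b' ∧ |r| * (b' - a') ≤ b - a
      · obtain ⟨a', ha', b', hb', h1, h2, h3⟩ := hcase
        have h4 := ht a' ha' b' hb' h1 h2
        calc |r * t| = |r| * |t| := abs_mul r t
          _ < |r| * (b' - a') := mul_lt_mul_of_pos_left h4 hrpos
          _ ≤ b - a := h3
      · push_neg at hcase
        exfalso
        have hg : (b - a) / |r| ∈ E := E.div_mem (E.sub_mem hbE haE) (hOE habs)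
        have hgpos : (0 : K) < (b - a) / |r| := div_pos hba hrpos
        have hcond : ∀ a' ∈ E, ∀ b' ∈ E, a' < x → x < b' → abs ((b - a) / |r|) < b' - a' := by
          intro a' ha' b' hb' h1 h2
          have h3 := hcase a' ha' b' hb' h1 h2
          rw [abs_of_pos hgpos, div_lt_iff₀ hrpos]
          linarith [mul_comm (b' - a') (|r|)]
        obtain ⟨_, h2⟩ := hBr _ hg hcond (|r|) habs
        have h3 := h2 a haE b hbE hax hxb
        rw [mul_div_cancel₀ _ (ne_of_gt hrpos), abs_of_pos hba] at h3
        exact lt_irrefl _ h3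
end

section
/- Let ∂ be a derivation on a field E* with valuation subring O* and maximal ideal 𝔬*. Then for every a in E*: O*∂(aO*) = aO*∂O* + (∂a)·O*, i.e. the O*-module generated by derivatives of elements of aO* equals the O*-module generated by a∂O* together with ∂a. -/
/-- For a derivation on a valued field and any `a`:
`O∂(aO) = aO∂O + (∂a)·O` as `O`-modules. -/
theorem stmt_7 {K : Type*} [Field K] (O : Subring K)
    (hval : ∀ x : K, x ∈ O ∨ x⁻¹ ∈ O)
    (D : K → K) (hadd : ∀ a b, D (a + b) = D a + D b)
    (hmul : ∀ a b, D (a * b) = a * D b + b * D a) (a : K) :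
    AddSubgroup.closure {z : K | ∃ r ∈ O, ∃ s ∈ O, z = r * D (a * s)} =
      AddSubgroup.closure {z : K | ∃ r ∈ O, ∃ s ∈ O, z = a * r * D s} ⊔
        AddSubgroup.closure {z : K | ∃ r ∈ O, z = r * D a} := by
  have hD1 : D 1 = 0 := by
    have h := hmul 1 1
    rw [mul_one] at h
    linear_combination -h
  have hDa : D (a * 1) = D a := by
    rw [hmul, hD1]; ring
  apply le_antisymm
  · rw [AddSubgroup.closure_le]
    rintro z ⟨r, hr, s, hs, rfl⟩
    have h1 : a * r * D s ∈
        AddSubgroup.closure {z : K | ∃ r ∈ O, ∃ s ∈ O, z = a * r * D s} :=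
      AddSubgroup.subset_closure ⟨r, hr, s, hs, rfl⟩
    have h2 : (r * s) * D a ∈
        AddSubgroup.closure {z : K | ∃ r ∈ O, z = r * D a} :=
      AddSubgroup.subset_closure ⟨r * s, mul_mem hr hs, rfl⟩
    have : r * D (a * s) = a * r * D s + (r * s) * D a := by
      rw [hmul]; ring
    rw [this]
    exact add_mem (SetLike.le_def.mp le_sup_left h1)
      (SetLike.le_def.mp le_sup_right h2)
  · apply sup_le
    · rw [AddSubgroup.closure_le]
      rintro z ⟨r, hr, s, hs, rfl⟩
      have h1 : r * D (a * s) ∈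
          AddSubgroup.closure {z : K | ∃ r ∈ O, ∃ s ∈ O, z = r * D (a * s)} :=
        AddSubgroup.subset_closure ⟨r, hr, s, hs, rfl⟩
      have h2 : (r * s) * D (a * 1) ∈
          AddSubgroup.closure {z : K | ∃ r ∈ O, ∃ s ∈ O, z = r * D (a * s)} :=
        AddSubgroup.subset_closure ⟨r * s, mul_mem hr hs, 1, one_mem O, rfl⟩
      have : a * r * D s = r * D (a * s) - (r * s) * D (a * 1) := by
        rw [hmul, hDa]; ring
      rw [this]
      exact sub_mem h1 h2
    · rw [AddSubgroup.closure_le]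
      rintro z ⟨r, hr, rfl⟩
      have : r * D a = r * D (a * 1) := by rw [hDa]
      rw [this]
      exact AddSubgroup.subset_closure ⟨r, hr, 1, one_mem O, rfl⟩
end

section
/- Let E* be an ordered field, O* = the convex hull of ℤ in E*, and ∂ a derivation on E*. Suppose x, y in E* satisfy: ∂(z) > c for every z in [x,y]+O* and every c in E* with c < ∂O* (pointwise below the module O*∂O*), and ∂O* + ∂x ≺ ∂y. Then for all z in [x,y]+O*, ∂z ≼ ∂y. -/
/-- Local monotonicity of a derivation with respect to the convex hull of `ℤ`:
if `∂z` exceeds everything below `O∂O` on `[x,y]+O` and `∂O + ∂x ≺ ∂y`, then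
`∂z ≼ ∂y` for all `z ∈ [x,y]+O`. -/
theorem stmt_10 {K : Type*} [Field K] [LinearOrder K] [IsStrictOrderedRing K]
    (D : K → K) (hadd : ∀ a b, D (a + b) = D a + D b)
    (hmul : ∀ a b, D (a * b) = a * D b + b * D a)
    (x y : K) :
    let Oset : Set K := {t : K | ∃ n : ℕ, |t| ≤ (n : K)}
    let preceq : K → K → Prop := fun a b => ∃ r ∈ Oset, a = b * r
    let prec : K → K → Prop := fun a b => preceq a b ∧ ¬ preceq b a
    let M : AddSubgroup K :=
      AddSubgroup.closure {w : K | ∃ r ∈ Oset, ∃ s ∈ Oset, w = r * D s}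
    let T : Set K := {z : K | ∃ u : K, x ≤ u ∧ u ≤ y ∧ ∃ r ∈ Oset, z = u + r}
    (∀ z ∈ T, ∀ c : K, (∀ w ∈ M, c < w) → c < D z) →
    (∀ r ∈ Oset, prec (D r + D x) (D y)) →
    ∀ z ∈ T, preceq (D z) (D y) := by
  intro Oset preceq prec M T h1 h2 z hz
  -- basic facts about D
  have hD0 : D 0 = 0 := by have h := hadd 0 0; rw [add_zero] at h; linarith
  have hDneg : ∀ a : K, D (-a) = -D a := by
    intro a
    have h := hadd a (-a)
    rw [add_neg_cancel, hD0] at h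
    linarith
  -- facts about Oset
  have hO0 : (0 : K) ∈ Oset := ⟨0, by simp⟩
  have hOadd : ∀ a ∈ Oset, ∀ b ∈ Oset, a + b ∈ Oset := by
    rintro a ⟨n, hn⟩ b ⟨m, hm⟩
    exact ⟨n + m, by push_cast; calc |a + b| ≤ |a| + |b| := abs_add_le a b
      _ ≤ (n : K) + m := by linarith⟩
  have hOneg : ∀ a ∈ Oset, -a ∈ Oset := by
    rintro a ⟨n, hn⟩
    exact ⟨n, by rwa [abs_neg]⟩
  have hOsub : ∀ a ∈ Oset, ∀ b ∈ Oset, a - b ∈ Oset := by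
    intro a ha b hb
    rw [sub_eq_add_neg]
    exact hOadd a ha _ (hOneg b hb)
  -- D y ≠ 0
  obtain ⟨⟨s0, hs0O, hs0⟩, hnot0⟩ := h2 0 hO0
  have hDx : D x = D y * s0 := by rw [hD0] at hs0; linarith
  have hDy : D y ≠ 0 := by
    intro h
    apply hnot0
    refine ⟨0, hO0, ?_⟩
    rw [h, hD0, hDx, h]
    ring
  have hDyabs : 0 < |D y| := abs_pos.mpr hDy
  -- every D r for r finite is a finite multiple of D y
  have hDr : ∀ r ∈ Oset, ∃ t ∈ Oset, D r = D y * t := by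
    intro r hr
    obtain ⟨⟨s, hsO, hs⟩, -⟩ := h2 r hr
    refine ⟨s - s0, hOsub s hsO s0 hs0O, ?_⟩
    rw [mul_sub]
    linarith
  -- every element of M is a finite multiple of D y
  have hM : ∀ w ∈ M, ∃ k ∈ Oset, w = D y * k := by
    intro w hw
    induction hw using AddSubgroup.closure_induction with
    | mem w hw =>
        obtain ⟨r, hrO, s, hsO, rfl⟩ := hw
        obtain ⟨t, htO, ht⟩ := hDr s hsO
        obtain ⟨nr, hnr⟩ := hrO
        obtain ⟨nt, hnt⟩ := htO
        refine ⟨r * t, ⟨nr * nt, ?_⟩, by rw [ht]; ring⟩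
        push_cast
        rw [abs_mul]
        exact mul_le_mul hnr hnt (abs_nonneg t) (Nat.cast_nonneg nr)
    | zero => exact ⟨0, hO0, by ring⟩
    | add a b _ _ ha hb =>
        obtain ⟨k1, hk1O, hk1⟩ := ha
        obtain ⟨k2, hk2O, hk2⟩ := hb
        exact ⟨k1 + k2, hOadd k1 hk1O k2 hk2O, by rw [hk1, hk2]; ring⟩
    | neg a _ ha =>
        obtain ⟨k1, hk1O, hk1⟩ := ha
        exact ⟨-k1, hOneg k1 hk1O, by rw [hk1]; ring⟩
  -- key: D u is a finite multiple of D y for u ∈ [x,y]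
  have key : ∀ u : K, x ≤ u → u ≤ y → ∃ t ∈ Oset, D u = D y * t := by
    intro u hxu huy
    by_contra hcon
    push_neg at hcon
    have hbig : ∀ n : ℕ, (n : K) * |D y| < |D u| := by
      intro n
      by_contra hle
      push_neg at hle
      refine hcon (D u / D y) ⟨n, ?_⟩ ?_
      · rw [abs_div, div_le_iff₀ hDyabs]
        linarith
      · field_simp
    rcases le_or_gt (D u) 0 with hneg | hpos
    · have huT : u ∈ T := ⟨u, hxu, huy, 0, hO0, (add_zero u).symm⟩
      have := h1 u huT (D u) ?_
      · exact lt_irrefl _ this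
      intro w hw
      obtain ⟨k, ⟨nk, hnk⟩, rfl⟩ := hM w hw
      have h3 := hbig nk
      have h4 : -(D y * k) ≤ |D y| * nk := by
        calc -(D y * k) ≤ |D y * k| := neg_le_abs _
          _ = |D y| * |k| := abs_mul _ _
          _ ≤ |D y| * nk := by
            exact mul_le_mul_of_nonneg_left hnk (abs_nonneg _)
      have h5 : |D u| = -D u := abs_of_nonpos hneg
      linarith
    · -- D u > 0: use the reflected point x + y - u
      have hz'T : x + y - u ∈ T :=
        ⟨x + y - u, by linarith, by linarith, 0, hO0, (add_zero _).symm⟩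
      have hDz' : D (x + y - u) = D x + D y - D u := by
        have e : x + y - u = x + (y + -u) := by ring
        rw [e, hadd, hadd, hDneg]
        ring
      obtain ⟨n0, hn0⟩ := hs0O
      have := h1 (x + y - u) hz'T (D (x + y - u)) ?_
      · exact lt_irrefl _ this
      intro w hw
      obtain ⟨k, ⟨nk, hnk⟩, rfl⟩ := hM w hw
      have h3 := hbig (n0 + 1 + nk)
      have hb1 : D y * s0 ≤ |D y| * n0 := by
        calc D y * s0 ≤ |D y * s0| := le_abs_self _
          _ = |D y| * |s0| := abs_mul _ _
          _ ≤ |D y| * n0 := mul_le_mul_of_nonneg_left hn0 (abs_nonneg _)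
      have hb2 : -(D y * k) ≤ |D y| * nk := by
        calc -(D y * k) ≤ |D y * k| := neg_le_abs _
          _ = |D y| * |k| := abs_mul _ _
          _ ≤ |D y| * nk := mul_le_mul_of_nonneg_left hnk (abs_nonneg _)
      have hb3 : D y ≤ |D y| := le_abs_self _
      have h5 : |D u| = D u := abs_of_pos hpos
      rw [hDz', hDx]
      push_cast at h3
      linarith
  -- conclude
  obtain ⟨u, hxu, huy, r, hrO, hzeq⟩ := hz
  obtain ⟨t, htO, ht⟩ := key u hxu huy
  obtain ⟨t', ht'O, ht'⟩ := hDr r hrO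
  refine ⟨t + t', hOadd t htO t' ht'O, ?_⟩
  rw [hzeq, hadd, ht, ht']
  ring
end

section
/- Let (E*, O*, ∂) be a valued differential field with constants E = Kr(∂), and suppose every O*-submodule of E* is ∂-convex. Then for all x in E* \ E: br(x/E) ⊇ br(∂/∂x) ∩ (∂)^{-1}(𝔬*·∂x), and in fact equality br(x/E) = br(∂/∂x) ∩ ∂^{-1}(𝔬*·∂x) holds, where br(x/E) = {y : x ∉ E + yO*} and br(∂) = {y : y·∂O* ≺ 1}. -/
/-- If every `O`-submodule is `∂`-convex, then for `x` with `∂x ≠ 0`: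
`br(x/E) = br(∂/∂x) ∩ ∂⁻¹(𝔬·∂x)`, where `E = Kr(∂)`. -/
theorem stmt_12 {K : Type*} [Field K] (O : Subring K)
    (hval : ∀ x : K, x ∈ O ∨ x⁻¹ ∈ O)
    (D : K → K) (hadd : ∀ a b, D (a + b) = D a + D b)
    (hmul : ∀ a b, D (a * b) = a * D b + b * D a) :
    let mo : Set K := {t : K | t ≠ 0 → t⁻¹ ∉ O}
    let preceq : K → K → Prop := fun a b => ∃ r ∈ O, a = b * r
    let prec : K → K → Prop := fun a b => preceq a b ∧ ¬ preceq b a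
    -- every O-submodule is ∂-convex:
    (∀ M : Set K,
      (0 ∈ M ∧ (∀ u ∈ M, ∀ v ∈ M, u + v ∈ M) ∧ ∀ r ∈ O, ∀ m ∈ M, r * m ∈ M) →
      ∀ z : K, (¬ ∃ m ∈ M, D z = D m) → ∀ m ∈ M, prec (D m) (D z)) →
    ∀ x : K, D x ≠ 0 →
      {t : K | ∀ c : K, D c = 0 → ∃ ε ∈ mo, t = (x - c) * ε} =
        {t : K | ∀ r ∈ O, ∃ ε ∈ mo, t * D r = D x * ε} ∩
          {t : K | ∃ ε ∈ mo, D t = D x * ε} := by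
  intro mo preceq prec hconv x hx
  have hmo_def : ∀ a : K, a ∈ mo ↔ (a ≠ 0 → a⁻¹ ∉ O) := fun a => Iff.rfl
  have hprec_def : ∀ a b : K,
      prec a b ↔ ((∃ r ∈ O, a = b * r) ∧ ¬ ∃ r ∈ O, b = a * r) := fun a b => Iff.rfl
  -- basic derivation facts
  have hD0 : D 0 = 0 := by
    have h := hmul 0 0
    simpa using h
  have hDneg : ∀ a : K, D (-a) = - D a := by
    intro a
    have h : D a + D (-a) = 0 := by
      rw [← hadd]; simp [hD0]
    linear_combination h
  have hDsub : ∀ a b : K, D (a - b) = D a - D b := by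
    intro a b
    rw [sub_eq_add_neg, hadd, hDneg]; ring
  -- facts about the maximal ideal mo
  have hmoO : ∀ r ∈ O, ∀ ε ∈ mo, r * ε ∈ mo := by
    intro r hr ε hε
    rw [hmo_def]
    intro hne hinv
    have hε0 : ε ≠ 0 := by
      intro h; apply hne; rw [h, mul_zero]
    have hr0 : r ≠ 0 := by
      intro h; apply hne; rw [h, zero_mul]
    have heq : ε⁻¹ = r * (r * ε)⁻¹ := by
      field_simp
    exact hε hε0 (heq ▸ O.mul_mem hr hinv)
  have hmoadd : ∀ a ∈ mo, ∀ b ∈ mo, a + b ∈ mo := by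
    intro a ha b hb
    rw [hmo_def]
    intro hne hinv
    by_cases ha0 : a = 0
    · exact hb (by simpa [ha0] using hne) (by simpa [ha0] using hinv)
    by_cases hb0 : b = 0
    · exact ha (by simpa [hb0] using hne) (by simpa [hb0] using hinv)
    rcases hval (a * b⁻¹) with h | h
    · have h1 : (a + b) * b⁻¹ ∈ O := by
        have : (a + b) * b⁻¹ = a * b⁻¹ + 1 := by field_simp
        rw [this]; exact O.add_mem h O.one_mem
      have heq : b⁻¹ = (a + b)⁻¹ * ((a + b) * b⁻¹) := by
        field_simp
      exact hb hb0 (heq ▸ O.mul_mem hinv h1)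
    · have h' : b * a⁻¹ ∈ O := by
        rwa [mul_inv, inv_inv, mul_comm] at h
      have h1 : (a + b) * a⁻¹ ∈ O := by
        have : (a + b) * a⁻¹ = 1 + b * a⁻¹ := by field_simp
        rw [this]; exact O.add_mem O.one_mem h'
      have heq : a⁻¹ = (a + b)⁻¹ * ((a + b) * a⁻¹) := by
        field_simp
      exact ha ha0 (heq ▸ O.mul_mem hinv h1)
  have hone : (1 : K) ∉ mo := by
    intro h
    exact h one_ne_zero (by simpa using O.one_mem)
  ext t
  simp only [Set.mem_setOf_eq, Set.mem_inter_iff]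
  constructor
  · -- forward direction (uses convexity)
    intro ht
    set M : Set K := {m : K | ∃ r ∈ O, m = t * r} with hM
    have hmod : 0 ∈ M ∧ (∀ u ∈ M, ∀ v ∈ M, u + v ∈ M) ∧
        ∀ r ∈ O, ∀ m ∈ M, r * m ∈ M := by
      refine ⟨⟨0, O.zero_mem, by ring⟩, ?_, ?_⟩
      · rintro u ⟨r1, hr1, rfl⟩ v ⟨r2, hr2, rfl⟩
        exact ⟨r1 + r2, O.add_mem hr1 hr2, by ring⟩
      · rintro r hr m ⟨s, hs, rfl⟩
        exact ⟨r * s, O.mul_mem hr hs, by ring⟩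
    have hnot : ¬ ∃ m ∈ M, D x = D m := by
      rintro ⟨m, ⟨r, hr, rfl⟩, heq⟩
      by_cases ht0 : t = 0
      · apply hx
        rw [heq, ht0, zero_mul, hD0]
      · have hc : D (x - t * r) = 0 := by
          rw [hDsub, heq, sub_self]
        obtain ⟨ε, hε, htε⟩ := ht (x - t * r) hc
        have htε' : t = t * r * ε := by
          have : x - (x - t * r) = t * r := by ring
          rwa [this] at htε
        have h1 : (1 : K) = r * ε := by
          have h2 : t * 1 = t * (r * ε) := by linear_combination htε'
          exact mul_left_cancel₀ ht0 h2
        have hεne : ε ≠ 0 := by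
          intro h; rw [h, mul_zero] at h1; exact one_ne_zero h1
        have hrε : r = ε⁻¹ := eq_inv_of_mul_eq_one_left h1.symm
        exact hε hεne (hrε ▸ hr)
    have hall := hconv M hmod x hnot
    have precDx : ∀ a : K, prec a (D x) → ∃ ε ∈ mo, a = D x * ε := by
      intro a hp
      rw [hprec_def] at hp
      obtain ⟨⟨r, hr, rfl⟩, hnb⟩ := hp
      refine ⟨r, ?_, rfl⟩
      rw [hmo_def]
      intro hr0 hrinv
      exact hnb ⟨r⁻¹, hrinv, by field_simp⟩
    obtain ⟨ε, hε, hDt⟩ := precDx (D t) (hall t ⟨1, O.one_mem, (mul_one t).symm⟩)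
    refine ⟨?_, ε, hε, hDt⟩
    intro r hr
    obtain ⟨ε', hε', h1⟩ := precDx (D (t * r)) (hall (t * r) ⟨r, hr, rfl⟩)
    refine ⟨ε' + (-r) * ε, hmoadd _ hε' _ (hmoO _ (O.neg_mem hr) _ hε), ?_⟩
    linear_combination h1 - hmul t r - r * hDt
  · -- backward direction
    rintro ⟨hA, hB⟩ c hc
    obtain ⟨ε, hε, hDt⟩ := hB
    have hxc : x - c ≠ 0 := by
      intro h
      rw [sub_eq_zero] at h
      exact hx (by rw [h]; exact hc)
    by_contra hno
    push_neg at hno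
    set ε₀ : K := t * (x - c)⁻¹ with hε₀
    have ht_eq : t = (x - c) * ε₀ := by
      rw [hε₀, mul_comm t, ← mul_assoc, mul_inv_cancel₀ hxc, one_mul]
    have hε₀notmo : ε₀ ∉ mo := fun hm => hno ε₀ hm ht_eq
    rw [hmo_def] at hε₀notmo
    push_neg at hε₀notmo
    obtain ⟨hε₀ne, hrO⟩ := hε₀notmo
    have ht0 : t ≠ 0 := by
      intro h
      apply hε₀ne
      rw [hε₀, h, zero_mul]
    have hxceq : x - c = t * ε₀⁻¹ := by
      rw [hε₀]
      field_simp
    obtain ⟨ε₁, hε₁, hA1⟩ := hA ε₀⁻¹ hrO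
    have hDxc : D (x - c) = D x := by rw [hDsub, hc, sub_zero]
    have hc2 : D (x - c) = D (t * ε₀⁻¹) := by rw [hxceq]
    have hDeq : D x = D x * (ε₁ + ε₀⁻¹ * ε) := by
      linear_combination hc2 - hDxc + hmul t ε₀⁻¹ + hA1 + ε₀⁻¹ * hDt
    have hδ : ε₁ + ε₀⁻¹ * ε ∈ mo := hmoadd _ hε₁ _ (hmoO _ hrO _ hε)
    have h1δ : ε₁ + ε₀⁻¹ * ε = 1 := by
      have h2 : D x * (ε₁ + ε₀⁻¹ * ε) = D x * 1 := by linear_combination - hDeq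
      exact mul_left_cancel₀ hx h2
    rw [h1δ] at hδ
    exact hone hδ
end

section
/- Let (E*, O*, ∂) be a valued differential field such that the breadth of ∂ has small derivatives (∂(br(∂)) ≺ 1, i.e. y∂O* ≺ 1 implies ∂y ≺ 1) and O* \ 𝔬* is †-convex. Let E = Kr(∂). Then for all x ∈ E*^{≠0}: v(x) ∈ v(E) if and only if ∂(br(∂)·x) ≺ x. In particular, for a ∈ E*, the rescaled derivation a∂ satisfies ∂-breadth smallness (is weakly absorbed) if and only if v(a) ∈ v(E). -/
/-- For a weakly absorbed derivation (`∂(br ∂) ≺ 1`) with `O \ 𝔬` †-convex: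
`v(x) ∈ v(E)` iff `∂(br(∂)·x) ≺ x`; in particular `a∂` is weakly absorbed iff
`v(a) ∈ v(E)`, where `E = Kr(∂)`. -/
theorem stmt_14 {K : Type*} [Field K] (O : Subring K)
    (hval : ∀ x : K, x ∈ O ∨ x⁻¹ ∈ O)
    (D : K → K) (hadd : ∀ a b, D (a + b) = D a + D b)
    (hmul : ∀ a b, D (a * b) = a * D b + b * D a) :
    let mo : Set K := {t : K | t ≠ 0 → t⁻¹ ∉ O}
    let preceq : K → K → Prop := fun a b => ∃ r ∈ O, a = b * r
    let prec : K → K → Prop := fun a b => preceq a b ∧ ¬ preceq b a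
    let vinE : K → Prop := fun a => ∃ c : K, D c = 0 ∧ preceq a c ∧ preceq c a
    -- ∂(br(∂)) ≺ 1:
    (∀ t : K, (∀ r ∈ O, t * D r ∈ mo) → D t ∈ mo) →
    -- O \ 𝔬 is †-convex:
    (∀ z : K, z ≠ 0 → ¬ vinE z → ∀ r ∈ O, prec (D r) (D z / z)) →
    ((∀ x : K, x ≠ 0 →
        (vinE x ↔ ∀ b : K, (∀ r ∈ O, b * D r ∈ mo) → ∃ ε ∈ mo, D (b * x) = x * ε))
      ∧ (∀ a : K,
        ((∀ t : K, (∀ r ∈ O, t * (a * D r) ∈ mo) → a * D t ∈ mo) ↔ vinE a))) := by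
  intro mo preceq prec vinE H1 H2
  -- basic derivation facts
  have D0 : D 0 = 0 := by
    have h := hadd 0 0
    rw [add_zero] at h
    linear_combination -h
  have D1 : D 1 = 0 := by
    have h := hmul 1 1
    simp only [mul_one, one_mul] at h
    linear_combination -h
  -- basic mo facts
  have mo_zero : (0 : K) ∈ mo := fun h => absurd rfl h
  have mo_neg : ∀ t ∈ mo, -t ∈ mo := by
    intro t ht hne hinv
    have ht0 : t ≠ 0 := fun h => hne (by simp [h])
    apply ht ht0
    rw [inv_neg] at hinv
    simpa using O.neg_mem hinv
  have mo_add : ∀ t ∈ mo, ∀ u ∈ mo, t + u ∈ mo := by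
    intro t ht u hu hne hinv
    by_cases ht0 : t = 0
    · exact hu (by simpa [ht0] using hne) (by simpa [ht0] using hinv)
    by_cases hu0 : u = 0
    · exact ht (by simpa [hu0] using hne) (by simpa [hu0] using hinv)
    rcases hval (t * u⁻¹) with h | h
    · apply hu hu0
      have e : u⁻¹ = (t * u⁻¹ + 1) * (t + u)⁻¹ := by
        field_simp
      exact e ▸ O.mul_mem (O.add_mem h O.one_mem) hinv
    · apply ht ht0
      rw [mul_inv, inv_inv] at h
      have e : t⁻¹ = (t⁻¹ * u + 1) * (t + u)⁻¹ := by
        have e0 : t⁻¹ * (t + u) = t⁻¹ * u + 1 := by field_simp; ring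
        rw [← e0, mul_assoc, mul_inv_cancel₀ hne, mul_one]
      exact e ▸ O.mul_mem (O.add_mem h O.one_mem) hinv
  have mo_mulO : ∀ t ∈ mo, ∀ r ∈ O, t * r ∈ mo := by
    intro t ht r hr hne hinv
    have ht0 : t ≠ 0 := left_ne_zero_of_mul hne
    have hr0 : r ≠ 0 := right_ne_zero_of_mul hne
    apply ht ht0
    have e : t⁻¹ = r * (t * r)⁻¹ := by field_simp
    exact e ▸ O.mul_mem hr hinv
  have one_not_mo : (1 : K) ∉ mo := fun h => h one_ne_zero (by simpa using O.one_mem)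
  -- prec gives a small ratio
  have div_mo : ∀ u w : K, w ≠ 0 → prec u w → u / w ∈ mo := by
    intro u w hw ⟨⟨r0, hr0, hur⟩, hn⟩
    have : u / w = r0 := by rw [hur]; field_simp
    rw [this]
    intro hr0ne hinv
    apply hn
    refine ⟨r0⁻¹, hinv, ?_⟩
    rw [hur]
    field_simp
  -- Part 1
  have part1 : ∀ x : K, x ≠ 0 →
      (vinE x ↔ ∀ b : K, (∀ r ∈ O, b * D r ∈ mo) → ∃ ε ∈ mo, D (b * x) = x * ε) := by
    intro x hx
    constructor
    · rintro ⟨c, hDc, ⟨r, hr, hxr⟩, ⟨s, hs, hcs⟩⟩ b hb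
      refine ⟨b * D r * s + D b, mo_add _ (mo_mulO _ (hb r hr) s hs) _ (H1 b hb), ?_⟩
      have e1 := hmul b x
      have e2 : D x = c * D r + r * D c := by rw [hxr]; exact hmul c r
      linear_combination e1 + b * e2 + b * r * hDc + b * (D r) * hcs
    · intro hRHS
      by_contra hnv
      have hDx : D x ≠ 0 := by
        intro h
        exact hnv ⟨x, h, ⟨1, O.one_mem, (mul_one x).symm⟩, ⟨1, O.one_mem, (mul_one x).symm⟩⟩
      set b := x / D x with hbdef
      have hb : ∀ r ∈ O, b * D r ∈ mo := by
        intro r hr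
        have hw : D x / x ≠ 0 := div_ne_zero hDx hx
        have := div_mo (D r) (D x / x) hw (H2 x hx hnv r hr)
        have e : b * D r = D r / (D x / x) := by
          rw [hbdef, div_div_eq_mul_div]
          ring
        rw [e]
        exact this
      obtain ⟨ε, hε, heq⟩ := hRHS b hb
      have hbx : b * D x = x := div_mul_cancel₀ x hDx
      have e1 := hmul b x
      have key : (1 : K) + D b = ε := by
        have : x * (1 + D b) = x * ε := by linear_combination heq - e1 - hbx
        exact mul_left_cancel₀ hx this
      have : (1 : K) = ε + -(D b) := by linear_combination key
      exact one_not_mo (this ▸ mo_add ε hε _ (mo_neg _ (H1 b hb)))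
  refine ⟨part1, ?_⟩
  intro a
  by_cases ha : a = 0
  · subst ha
    constructor
    · intro _
      exact ⟨0, D0, ⟨0, O.zero_mem, by ring⟩, ⟨0, O.zero_mem, by ring⟩⟩
    · intro _ t _
      rw [zero_mul]
      exact mo_zero
  constructor
  · intro hL
    apply (part1 a ha).mpr
    intro b hb
    have hDb : D b ∈ mo := H1 b hb
    have ht : a * D (b / a) ∈ mo := by
      apply hL
      intro r hr
      have e : b / a * (a * D r) = b * D r := by field_simp
      rw [e]
      exact hb r hr
    have key : b / a * D a ∈ mo := by
      have h2 := hmul (b / a) a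
      rw [div_mul_cancel₀ b ha] at h2
      have e : b / a * D a = D b + -(a * D (b / a)) := by linear_combination -h2
      rw [e]
      exact mo_add _ hDb _ (mo_neg _ ht)
    refine ⟨D b + b / a * D a, mo_add _ hDb _ key, ?_⟩
    have e1 := hmul b a
    have e : a * (b / a) = b := by field_simp
    linear_combination e1 - D a * e
  · intro hv t htbr
    have hb : ∀ r ∈ O, (t * a) * D r ∈ mo := by
      intro r hr
      have := htbr r hr
      rwa [← mul_assoc] at this
    have hDb : D (t * a) ∈ mo := H1 (t * a) hb
    obtain ⟨ε, hε, heq⟩ := (part1 a ha).mp hv (t * a) hb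
    have e1 := hmul (t * a) a
    have e2 := hmul t a
    have key : t * D a = ε + -(D (t * a)) := by
      have : a * (t * D a) = a * (ε + -(D (t * a))) := by
        linear_combination heq - e1
      exact mul_left_cancel₀ ha this
    have e : a * D t = D (t * a) + (D (t * a) + -ε) := by linear_combination -key - e2
    rw [e]
    exact mo_add _ hDb _ (mo_add _ hDb _ (mo_neg _ hε))
end

section
/- Let (E*, O*, ∂) be a valued differential field with ∂(br(∂)) ≺ 1 and O* \ 𝔬* is †-convex, E = Kr(∂). Suppose c ∈ E and v(y − c) ∉ v(E). Then y − c ∼ ∂y / (∂y)†, i.e. y − c ∼ (∂y)²/∂²y (asymptotic equivalence: the quotient lies in 1 + 𝔬*). -/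
/-- If `∂(br ∂) ≺ 1`, `O \ 𝔬` is †-convex, `c` is a constant and `v(y-c) ∉ v(E)`,
then `y - c ∼ (∂y)²/∂²y`. -/
theorem stmt_15 {K : Type*} [Field K] (O : Subring K)
    (hval : ∀ x : K, x ∈ O ∨ x⁻¹ ∈ O)
    (D : K → K) (hadd : ∀ a b, D (a + b) = D a + D b)
    (hmul : ∀ a b, D (a * b) = a * D b + b * D a)
    (y c : K) :
    let mo : Set K := {t : K | t ≠ 0 → t⁻¹ ∉ O}
    let preceq : K → K → Prop := fun a b => ∃ r ∈ O, a = b * r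
    let prec : K → K → Prop := fun a b => preceq a b ∧ ¬ preceq b a
    let vinE : K → Prop := fun a => ∃ e : K, D e = 0 ∧ preceq a e ∧ preceq e a
    -- ∂(br(∂)) ≺ 1:
    (∀ t : K, (∀ r ∈ O, t * D r ∈ mo) → D t ∈ mo) →
    -- O \ 𝔬 is †-convex:
    (∀ z : K, z ≠ 0 → ¬ vinE z → ∀ r ∈ O, prec (D r) (D z / z)) →
    D c = 0 →
    ¬ vinE (y - c) →
    ∃ ε ∈ mo, (y - c) - (D y) ^ 2 / D (D y) = ((D y) ^ 2 / D (D y)) * ε := by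
  intro mo preceq prec vinE H1 H2 hc hv
  -- basic derivation facts
  have hD0 : D 0 = 0 := by
    have h := hadd 0 0
    rw [add_zero] at h
    exact (left_eq_add.mp h)
  have hDneg : ∀ a : K, D (-a) = -D a := by
    intro a
    have h := hadd a (-a)
    rw [add_neg_cancel, hD0] at h
    linear_combination -h
  have hD1 : D 1 = 0 := by
    have h := hmul 1 1
    rw [mul_one, one_mul] at h
    linear_combination -h
  set x : K := y - c with hxdef
  have hDx : D x = D y := by
    have h := hadd y (-c)
    rw [hDneg, hc, neg_zero, add_zero] at h
    simpa [hxdef, sub_eq_add_neg] using h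
  -- x ≠ 0
  have hx : x ≠ 0 := by
    intro h0
    exact hv ⟨0, hD0, ⟨1, O.one_mem, by rw [h0, zero_mul]⟩, ⟨1, O.one_mem, by rw [h0, zero_mul]⟩⟩
  -- D y ≠ 0
  have ha : D y ≠ 0 := by
    intro h0
    exact hv ⟨x, by rw [hDx, h0], ⟨1, O.one_mem, (mul_one x).symm⟩, ⟨1, O.one_mem, (mul_one x).symm⟩⟩
  -- t = x / D y lies in br(∂)
  have hbr : ∀ r ∈ O, (x / D y) * D r ∈ mo := by
    intro r hr
    obtain ⟨⟨s, hs, hDr⟩, hnp⟩ := H2 x hx hv r hr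
    rw [hDx] at hDr
    have heq : (x / D y) * D r = s := by
      rw [hDr]; field_simp
    rw [heq]
    intro hs0 hsinv
    apply hnp
    refine ⟨s⁻¹, hsinv, ?_⟩
    rw [hDr]
    field_simp
    rw [hDx]
  have hDt : D (x / D y) ∈ mo := H1 (x / D y) hbr
  -- compute D (x / D y)
  have hDinv : D (D y)⁻¹ = -(D (D y)) * ((D y)⁻¹) ^ 2 := by
    have h := hmul (D y) (D y)⁻¹
    rw [mul_inv_cancel₀ ha, hD1] at h
    have h2 : D y * D (D y)⁻¹ = -((D y)⁻¹ * D (D y)) := by linear_combination -h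
    have h3 := congrArg (fun z => (D y)⁻¹ * z) h2
    rw [← mul_assoc, inv_mul_cancel₀ ha, one_mul] at h3
    rw [h3]; ring
  have hcomp : D (x / D y) = 1 - x * D (D y) / (D y) ^ 2 := by
    have h := hmul x (D y)⁻¹
    rw [div_eq_mul_inv, h, hDinv, hDx]
    field_simp
    ring
  -- D (D y) ≠ 0
  have hb : D (D y) ≠ 0 := by
    intro h0
    rw [hcomp, h0] at hDt
    simp only [mul_zero, zero_div, sub_zero] at hDt
    exact hDt one_ne_zero (by simpa using O.one_mem)
  refine ⟨x * D (D y) / (D y) ^ 2 - 1, ?_, ?_⟩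
  · -- ε = -(D t) ∈ mo
    intro hε0 hεinv
    have hne : D (x / D y) ≠ 0 := by
      rw [hcomp]
      intro h
      apply hε0
      linear_combination -h
    have : (D (x / D y))⁻¹ ∈ O := by
      have heq : (D (x / D y))⁻¹ = -(x * D (D y) / (D y) ^ 2 - 1)⁻¹ := by
        rw [hcomp, ← inv_neg]
        congr 1
        ring
      rw [heq]
      exact O.neg_mem hεinv
    exact hDt hne this
  · field_simp
end

section
/- Let (E*, O*, ∂) be a valued differential field with ∂(br(∂)) ≺ 1 and O* \ 𝔬* is †-convex, E = Kr(∂). Then every y ∈ E* with v(y) ∉ v(E) has an asymptotic integral: there exists z ∈ E* with ∂z ∼ y; explicitly z = y²/∂y works. -/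
/-- If `∂(br ∂) ≺ 1` and `O \ 𝔬` is †-convex, every `y` with `v(y) ∉ v(E)` has an
asymptotic integral; explicitly `z = y²/∂y` works. -/
theorem stmt_16 {K : Type*} [Field K] (O : Subring K)
    (hval : ∀ x : K, x ∈ O ∨ x⁻¹ ∈ O)
    (D : K → K) (hadd : ∀ a b, D (a + b) = D a + D b)
    (hmul : ∀ a b, D (a * b) = a * D b + b * D a) :
    let mo : Set K := {t : K | t ≠ 0 → t⁻¹ ∉ O}
    let preceq : K → K → Prop := fun a b => ∃ r ∈ O, a = b * r
    let prec : K → K → Prop := fun a b => preceq a b ∧ ¬ preceq b a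
    let vinE : K → Prop := fun a => ∃ e : K, D e = 0 ∧ preceq a e ∧ preceq e a
    -- ∂(br(∂)) ≺ 1:
    (∀ t : K, (∀ r ∈ O, t * D r ∈ mo) → D t ∈ mo) →
    -- O \ 𝔬 is †-convex:
    (∀ z : K, z ≠ 0 → ¬ vinE z → ∀ r ∈ O, prec (D r) (D z / z)) →
    ∀ y : K, ¬ vinE y →
      ∃ z : K, (∃ ε ∈ mo, D z - y = y * ε) ∧ z = y ^ 2 / D y := by
  intro mo preceq prec vinE habs hconv y hy
  have hD0 : D 0 = 0 := by have := hadd 0 0; simpa using this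
  have hy0 : y ≠ 0 := by
    rintro rfl
    exact hy ⟨0, hD0, ⟨0, O.zero_mem, by ring⟩, ⟨0, O.zero_mem, by ring⟩⟩
  have hDy : D y ≠ 0 := by
    intro h
    exact hy ⟨y, h, ⟨1, O.one_mem, by ring⟩, ⟨1, O.one_mem, by ring⟩⟩
  set t := y / D y with ht
  have hbr : ∀ r ∈ O, t * D r ∈ mo := by
    intro r hr hne hinv
    have hDr : D r ≠ 0 := by intro h; apply hne; rw [ht, h]; ring
    apply (hconv y hy0 hy r hr).2
    refine ⟨(t * D r)⁻¹, hinv, ?_⟩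
    rw [ht]; field_simp
  have hε := habs t hbr
  refine ⟨y ^ 2 / D y, ⟨D t, hε, ?_⟩, rfl⟩
  have hz : y ^ 2 / D y = y * t := by rw [ht]; field_simp
  have htDy : t * D y = y := by rw [ht]; field_simp
  rw [hz, hmul y t, htDy]; ring
end
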